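/- (Theorem: Cantor set colorings of A-tuples) Assume: for every nonempty finite set B and every finite Borel coloring of Map(ω, B) = B^ω there is h ∈ RSurj(ω, ω) with |γ(B^ω ∘ h)| ≤ t(B), where t(B) is the number of nonempty non-repeating words over B. Then for every nonempty finite set A and every finite Borel coloring γ : Map(A, 2^ω) → k there exists h ∈ RSurj(ω, ω) such that |γ(P(h) ∘ Map(A, 2^ω))| ≤ t(2^A), where P(h) : 2^ω → 2^ω is x ↦ x ∘ h. -/
import Mathlib


/-- Rigid surjection with domain `ω = ℕ`. -/
def RS {L : Type*} [Preorder L] (f : ℕ → L) : Prop :=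
  Function.Surjective f ∧ ∀ ⦃l₁ l₂ : L⦄, l₁ < l₂ →
    sInf {n : ℕ | f n = l₁} < sInf {n : ℕ | f n = l₂}

/-- The Borel (= product of discrete) σ-algebra on `ℕ → L`. -/
def piMS (L : Type*) : MeasurableSpace (ℕ → L) :=
  @MeasurableSpace.pi ℕ (fun _ => L) (fun _ => ⊤)

/-- `t(B)`: the number of nonempty non-repeating words over `B`. -/
noncomputable def numWords (B : Type*) : ℕ :=
  Nat.card {l : List B // l.Nodup ∧ l ≠ []}

/-- Assuming the finite big Ramsey bound for colorings of `B^ω` (with bound the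
number `t(B)` of nonempty non-repeating words over `B`), for every nonempty
finite `A` and every finite Borel coloring `γ` of `Map(A, 2^ω)` there is a rigid
surjection `h : ω → ℕ` with `|γ(P(h) ∘ Map(A, 2^ω))| ≤ t(2^A)`. -/
theorem cantor_tuples_coloring
    (H : ∀ (B : Type) [Fintype B] [Nonempty B] (k : ℕ) (γ : (ℕ → B) → Fin k),
      (∀ i, @MeasurableSet _ (piMS B) (γ ⁻¹' {i})) →
      ∃ h : ℕ → ℕ, RS h ∧
        (γ '' ((fun f : ℕ → B => f ∘ h) '' Set.univ)).ncard ≤ numWords B)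
    (A : Type) [Fintype A] [Nonempty A] (k : ℕ)
    (γ : (A → ℕ → Bool) → Fin k)
    (hγ : ∀ i, @MeasurableSet _ (borel (A → ℕ → Bool)) (γ ⁻¹' {i})) :
    ∃ h : ℕ → ℕ, RS h ∧
      (γ '' ((fun x : A → ℕ → Bool => fun a => x a ∘ h) '' Set.univ)).ncard ≤
        numWords (A → Bool) := by
  classical
  set B := (A → Bool) with hBdef
  let Φ : (ℕ → B) → (A → ℕ → Bool) := fun f a n => f n a
  -- borel on the target equals the standard pi measurable space
  have hb : borel (A → ℕ → Bool) = (inferInstance : MeasurableSpace (A → ℕ → Bool)) :=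
    (BorelSpace.measurable_eq (α := A → ℕ → Bool)).symm
  have hΦmeas : @Measurable _ _ (piMS B) (borel (A → ℕ → Bool)) Φ := by
    rw [hb]
    letI : MeasurableSpace B := ⊤
    letI : MeasurableSpace (ℕ → B) := piMS B
    exact measurable_pi_lambda Φ fun a =>
      measurable_pi_lambda _ fun n =>
        show Measurable ((fun b : B => b a) ∘ (fun f : ℕ → B => f n)) from
          measurable_from_top.comp (measurable_pi_apply n)
  let γ' : (ℕ → B) → Fin k := fun f => γ (Φ f)
  have hmeas : ∀ i, @MeasurableSet _ (piMS B) (γ' ⁻¹' {i}) := by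
    intro i
    have : γ' ⁻¹' {i} = Φ ⁻¹' (γ ⁻¹' {i}) := rfl
    rw [this]
    exact hΦmeas (hγ i)
  obtain ⟨h, hRS, hcard⟩ := H B k γ' hmeas
  refine ⟨h, hRS, ?_⟩
  have himg : (fun x : A → ℕ → Bool => fun a => x a ∘ h) '' Set.univ =
      Φ '' ((fun f : ℕ → B => f ∘ h) '' Set.univ) := by
    ext y
    constructor
    · rintro ⟨x, -, rfl⟩
      exact ⟨(fun n a => x a n) ∘ h, ⟨fun n a => x a n, trivial, rfl⟩, rfl⟩
    · rintro ⟨g, ⟨f, -, rfl⟩, rfl⟩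
      exact ⟨Φ f, trivial, rfl⟩
  have : γ '' ((fun x : A → ℕ → Bool => fun a => x a ∘ h) '' Set.univ) =
      γ' '' ((fun f : ℕ → B => f ∘ h) '' Set.univ) := by
    rw [himg, Set.image_image]
  rw [this]
  exact hcard
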